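/- Let Z be as in Theorem: Z = X \ {P_{i_1 j_1},…,P_{i_h j_h}} with X reduced ACM zero-dimensional in P^1 × P^1 and the removed points interior with pairwise distinct rows and columns. Then there exists a minimal set of generators of I_Z each of which is a product of bilinear forms of degree (1,0) and (0,1), i.e., each generator defines a curve that is a union of (1,0)- and (0,1)-lines. -/

import Mathlib

/- Common setup: the bigraded coordinate ring of Q = P^1 x P^1, bigraded Hilbert
functions, point ideals, separators, minimal free resolutions, staircase (Ferrers)
configurations of reduced ACM schemes. -/

open MvPolynomial

attribute [local instance] Classical.propDecidable

noncomputable section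

/-- Variables of the bihomogeneous coordinate ring: `inl` = x₀,x₁ and `inr` = y₀,y₁. -/
abbrev BiVar := Fin 2 ⊕ Fin 2

/-- The bigraded coordinate ring S = k[x₀,x₁;y₀,y₁] of Q = P¹ × P¹. -/
abbrev S2 (k : Type) [Field k] := MvPolynomial BiVar k

/-- The bigrading weights: x-variables have degree (1,0), y-variables degree (0,1). -/
def bw : BiVar → ℕ × ℕ := Sum.elim (fun _ => (1, 0)) (fun _ => (0, 1))

/-- P¹ over k. -/
abbrev P1 (k : Type) [Field k] := Projectivization k (Fin 2 → k)

/-- A point of Q = P¹ × P¹. -/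
abbrev PtQ (k : Type) [Field k] := P1 k × P1 k

variable {k : Type} [Field k]

/-- Evaluation of a polynomial at (a representative of) a point of Q. -/
def evalPt (x : PtQ k) : S2 k →+* k :=
  MvPolynomial.eval (Sum.elim x.1.rep x.2.rep)

/-- An ideal is bihomogeneous if it contains all bihomogeneous components of its members. -/
def IsBihom (I : Ideal (S2 k)) : Prop :=
  ∀ f ∈ I, ∀ d : ℕ × ℕ, weightedHomogeneousComponent bw d f ∈ I

/-- Saturation with respect to the irrelevant ideal (x₀,x₁) ∩ (y₀,y₁). -/
def IsSat (I : Ideal (S2 k)) : Prop :=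
  ∀ f : S2 k, (∀ i j : Fin 2, X (Sum.inl i) * X (Sum.inr j) * f ∈ I) → f ∈ I

/-- The zero locus in Q of a (bihomogeneous) ideal. -/
def biZeroLocus (I : Ideal (S2 k)) : Set (PtQ k) :=
  {x | ∀ f ∈ I, ∀ d : ℕ × ℕ, evalPt x (weightedHomogeneousComponent bw d f) = 0}

/-- The (saturated) ideal of a point of Q: generated by the bihomogeneous forms vanishing there. -/
def pointIdeal (x : PtQ k) : Ideal (S2 k) :=
  Ideal.span {f | (∃ d : ℕ × ℕ, IsWeightedHomogeneous bw f d) ∧ evalPt x f = 0}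

/-- The saturated ideal of a reduced finite set of points of Q. -/
def idealOfFinset (Z : Finset (PtQ k)) : Ideal (S2 k) :=
  ⨅ x ∈ Z, pointIdeal x

/-- The bigraded piece of degree d of an ideal, as a k-subspace. -/
def Ipiece (I : Ideal (S2 k)) (d : ℕ × ℕ) : Submodule k (S2 k) :=
  (Submodule.restrictScalars k I) ⊓ weightedHomogeneousSubmodule k bw d

/-- The bigraded Hilbert function M_X(i,j) = dim S_{i,j} - dim (I_X)_{i,j}. -/
def hilb (I : Ideal (S2 k)) (i j : ℕ) : ℕ :=
  Module.finrank k (weightedHomogeneousSubmodule k bw ((i, j) : ℕ × ℕ)) -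
    Module.finrank k (Ipiece I (i, j))

/-- The Hilbert function extended by 0 to negative arguments. -/
def HM (I : Ideal (S2 k)) (i j : ℤ) : ℤ :=
  if 0 ≤ i ∧ 0 ≤ j then (hilb I i.toNat j.toNat : ℤ) else 0

/-- The first difference ΔM_X of the Hilbert function. -/
def ΔH (I : Ideal (S2 k)) (i j : ℤ) : ℤ :=
  HM I i j - HM I (i - 1) j - HM I i (j - 1) + HM I (i - 1) (j - 1)

/-- Index of a nonzero coordinate of a nonzero vector in k². -/
def pivot (v : Fin 2 → k) : Fin 2 := if v 0 ≠ 0 then 0 else 1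

/-- The other index. -/
def off : Fin 2 → Fin 2 := fun s => if s = 0 then 1 else 0

/-- Dehomogenization onto the affine chart around a point of Q. -/
def chartHom (x : PtQ k) : S2 k →+* MvPolynomial (Fin 2) k :=
  (aeval (R := k) (Sum.elim
    (fun i : Fin 2 => if i = pivot x.1.rep then 1 else X 0)
    (fun j : Fin 2 => if j = pivot x.2.rep then 1 else X 1))).toRingHom

/-- The affine coordinates of a point of Q in its chart. -/
def affPt (x : PtQ k) : Fin 2 → k := fun u =>
  if u = 0 then x.1.rep (off (pivot x.1.rep)) / x.1.rep (pivot x.1.rep)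
  else x.2.rep (off (pivot x.2.rep)) / x.2.rep (pivot x.2.rep)

/-- The multiplicity m_X(P): the length of the local ring O_{X,P}, computed in the
affine chart as the stable value of dim A/(I_aff + m_P^n). -/
def mult (I : Ideal (S2 k)) (x : PtQ k) : ℕ :=
  ⨆ n : ℕ, Module.finrank k
    (MvPolynomial (Fin 2) k ⧸
      (Ideal.map (chartHom x) I ⊔ (RingHom.ker (MvPolynomial.eval (affPt x))) ^ n))

/-- X is arithmetically Cohen–Macaulay: depth S(X) = 2, i.e. there is a regular
sequence of length two on S/I_X inside the maximal ideal of S. -/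
def IsACM (I : Ideal (S2 k)) : Prop :=
  ∃ f g : S2 k, constantCoeff f = 0 ∧ constantCoeff g = 0 ∧
    (∀ h : S2 k, f * h ∈ I → h ∈ I) ∧
    (∀ h : S2 k, g * h ∈ I ⊔ Ideal.span {f} → h ∈ I ⊔ Ideal.span {f})

/-- f is a separator of degree d for the point x relative to the residual scheme Z:
f is bihomogeneous of degree d, vanishes on Z, and is nonzero at x. -/
def IsSeparator (IZ : Ideal (S2 k)) (x : PtQ k) (f : S2 k) (d : ℕ × ℕ) : Prop :=
  IsWeightedHomogeneous bw f d ∧ f ∈ IZ ∧ evalPt x f ≠ 0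

/-- The set of separating degrees for x relative to Z. -/
def SepDegs (IZ : Ideal (S2 k)) (x : PtQ k) : Set (ℕ × ℕ) :=
  {d | ∃ f, IsSeparator IZ x f d}

/-- d is a minimal separating degree (componentwise partial order). -/
def IsMinSepDeg (IZ : Ideal (S2 k)) (x : PtQ k) (d : ℕ × ℕ) : Prop :=
  d ∈ SepDegs IZ x ∧ ∀ e ∈ SepDegs IZ x, ¬ e < d

/-- d is the unique minimal separating degree. -/
def UniqueMinSepDeg (IZ : Ideal (S2 k)) (x : PtQ k) (d : ℕ × ℕ) : Prop :=
  IsMinSepDeg IZ x d ∧ ∀ e, IsMinSepDeg IZ x e → e = d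

/-- f splits into a product of forms of degree (1,0) and (0,1), i.e. the curve f = 0
is a union of (1,0)- and (0,1)-lines. -/
def SplitsIntoLines (f : S2 k) : Prop :=
  ∃ L : Multiset (S2 k),
    (∀ l ∈ L, IsWeightedHomogeneous bw l ((1 : ℕ), (0 : ℕ)) ∨
      IsWeightedHomogeneous bw l ((0 : ℕ), (1 : ℕ))) ∧ f = L.prod

/-- `IsMFR3 I d0 d1 d2` : the ideal I has minimal bigraded free resolution
0 → ⊕ S(-d2 i) → ⊕ S(-d1 i) → ⊕ S(-d0 i) → I → 0, given by a minimal generating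
system of the listed degrees, a first-syzygy matrix A and a second-syzygy matrix B,
homogeneous of the appropriate degrees, with entries in the maximal ideal (minimality). -/
def IsMFR3 {ι₀ ι₁ ι₂ : Type} [Fintype ι₀] [Fintype ι₁] [Fintype ι₂]
    (I : Ideal (S2 k)) (d0 : ι₀ → ℕ × ℕ) (d1 : ι₁ → ℕ × ℕ) (d2 : ι₂ → ℕ × ℕ) : Prop :=
  ∃ (g : ι₀ → S2 k) (A : ι₁ → ι₀ → S2 k) (B : ι₂ → ι₁ → S2 k),
    (∀ i, IsWeightedHomogeneous bw (g i) (d0 i)) ∧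
    I = Ideal.span (Set.range g) ∧
    (∀ i j, A i j = 0 ∨ (d0 j ≤ d1 i ∧
      IsWeightedHomogeneous bw (A i j) ((d1 i).1 - (d0 j).1, (d1 i).2 - (d0 j).2))) ∧
    (∀ i j, constantCoeff (A i j) = 0) ∧
    (∀ i, ∑ j, A i j * g j = 0) ∧
    (∀ v : ι₀ → S2 k, ∑ j, v j * g j = 0 →
      ∃ c : ι₁ → S2 k, ∀ j, v j = ∑ i, c i * A i j) ∧
    (∀ i j, B i j = 0 ∨ (d1 j ≤ d2 i ∧
      IsWeightedHomogeneous bw (B i j) ((d2 i).1 - (d1 j).1, (d2 i).2 - (d1 j).2))) ∧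
    (∀ i j, constantCoeff (B i j) = 0) ∧
    (∀ i j, ∑ l, B i l * A l j = 0) ∧
    (∀ c : ι₁ → S2 k, (∀ j, ∑ i, c i * A i j = 0) →
      ∃ e : ι₂ → S2 k, ∀ i, c i = ∑ l, e l * B l i) ∧
    (∀ e : ι₂ → S2 k, (∀ i, ∑ l, e l * B l i = 0) → e = 0)

/-- A minimal free resolution of length 2 (the ACM case). -/
def IsMFR2 {ι₀ ι₁ : Type} [Fintype ι₀] [Fintype ι₁]
    (I : Ideal (S2 k)) (d0 : ι₀ → ℕ × ℕ) (d1 : ι₁ → ℕ × ℕ) : Prop :=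
  IsMFR3 I d0 d1 (fun e : Fin 0 => e.elim0)

/-- A reduced ACM zero-dimensional scheme in Q: points P_{ij} = R_i ∩ C_j indexed by a
lower-closed (staircase/Ferrers) diagram D in a grid of distinct (1,0)-lines R_i and
(0,1)-lines C_j, each containing at least one point of X. -/
structure Staircase (k : Type) [Field k] where
  a : ℕ
  b : ℕ
  R : ℕ → P1 k
  C : ℕ → P1 k
  hR : ∀ i ≤ a, ∀ i' ≤ a, R i = R i' → i = i'
  hC : ∀ j ≤ b, ∀ j' ≤ b, C j = C j' → j = j'
  D : Finset (ℕ × ℕ)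
  bound : ∀ p ∈ D, p.1 ≤ a ∧ p.2 ≤ b
  lower : ∀ p ∈ D, ∀ q : ℕ × ℕ, q.1 ≤ p.1 → q.2 ≤ p.2 → q ∈ D
  rows : ∀ i ≤ a, (i, 0) ∈ D
  cols : ∀ j ≤ b, (0, j) ∈ D

namespace Staircase

variable (T : Staircase k)

/-- The points of X. -/
def pts : Finset (PtQ k) := T.D.image (fun p => (T.R p.1, T.C p.2))

/-- The saturated ideal of X. -/
def ideal : Ideal (S2 k) := idealOfFinset T.pts

/-- #(X ∩ R_i). -/
def rowCount (i : ℕ) : ℕ := (T.D.filter (fun p => p.1 = i)).card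

/-- #(X ∩ C_j). -/
def colCount (j : ℕ) : ℕ := (T.D.filter (fun p => p.2 = j)).card

/-- (r,s) is a corner for X: P_{r-1,s}, P_{r,s-1} ∈ X but P_{r,s} ∉ X. -/
def IsCorner (r s : ℕ) : Prop :=
  0 < r ∧ 0 < s ∧ (r - 1, s) ∈ T.D ∧ (r, s - 1) ∈ T.D ∧ (r, s) ∉ T.D

/-- P_{ij} is an interior point of X: strictly dominated componentwise by some corner. -/
def Interior (i j : ℕ) : Prop :=
  (i, j) ∈ T.D ∧ ∃ r s, T.IsCorner r s ∧ i < r ∧ j < s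

/-- The saturated ideal of X minus the points of X indexed by E. -/
def residual (E : Finset (ℕ × ℕ)) : Ideal (S2 k) :=
  idealOfFinset ((T.D \ E).image (fun p => (T.R p.1, T.C p.2)))

end Staircase

/-- (i,j) is a vertex for a difference matrix c. -/
def IsVertexΔ (c : ℤ → ℤ → ℤ) (i j : ℤ) : Prop :=
  c (i - 1) j ≤ 0 ∧ c i (j - 1) ≤ 0 ∧ c (i - 1) (j - 1) = 1

/-- (i,j) is a corner for a difference matrix c. -/
def IsCornerΔ (c : ℤ → ℤ → ℤ) (i j : ℤ) : Prop :=
  c i j ≤ 0 ∧ c i (j - 1) = 1 ∧ c (i - 1) j = 1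

end
/-!
Every bihomogeneous form vanishing on `Z` is reduced, modulo separators of the removed points, to
one vanishing on all of `X`, and `I_X` is generated by the staircase forms
`R₀ ⋯ R_{t-1} · C₀ ⋯ C_{r_t - 1}` (with `r_t = #(X ∩ R_t)`), obtained by peeling off one row at a
time: `f = ℓ ^ u · f|_{R_s} + R_s · h`, where the restriction `f|_{R_s}` is a binary form vanishing
at the `r_s` points of `X` on `R_s`, hence divisible by the product of their column lines.

The separator of a removed point `P_ij` is the product of the row lines through the other points
of `X` on the column `C_j` and of the column lines through the other points of `X` on the row
`R_i`. As no other removed point shares the row or column of `P_ij`, a form vanishing on `Z` but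
not at `P_ij` vanishes at these `c_j - 1` and `r_i - 1` points, so Bézout on `R_i` and `C_j` shows
that its bidegree dominates that of the separator, and subtracting a multiple of the separator
kills its value at `P_ij`. All generators obtained are products of lines, and any finite
generating set contains an irredundant one.
-/

open MvPolynomial Finset

attribute [local instance] MvPolynomial.weightedGradedAlgebra

namespace MvPolynomial

variable {σ R M : Type*} [CommSemiring R] [AddCommMonoid M] {w : σ → M}

theorem IsWeightedHomogeneous.aeval {τ M' : Type*} [AddCommMonoid M'] {w' : τ → M'}
    (φ : M →+ M') {f : MvPolynomial σ R} {d : M} (hf : IsWeightedHomogeneous w f d)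
    {g : σ → MvPolynomial τ R} (hg : ∀ n, IsWeightedHomogeneous w' (g n) (φ (w n))) :
    IsWeightedHomogeneous w' (aeval g f) (φ d) := by
  induction hf using IsWeightedHomogeneous.induction_on with
  | zero => simpa using isWeightedHomogeneous_zero R w' (φ d)
  | add p q _ _ hp hq => simpa using hp.add hq
  | monomial m r hm =>
    rw [aeval_monomial, algebraMap_eq, ← hm, Finsupp.weight_apply, map_finsuppSum]
    simpa [Finsupp.prod, Finsupp.sum] using
      (IsWeightedHomogeneous.prod _ _ _ fun n _ => (hg n).pow (m n)).C_mul r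

theorem aeval_pow_mul_of_isWeightedHomogeneous {S : Type*} [CommSemiring S] [Algebra R S]
    (ψ : M →+ ℕ) {f : MvPolynomial σ R} {d : M} (hf : IsWeightedHomogeneous w f d)
    (c : S) (g : σ → S) :
    aeval (fun n => c ^ ψ (w n) * g n) f = c ^ ψ d * aeval g f := by
  induction hf using IsWeightedHomogeneous.induction_on with
  | zero => simp
  | add p q _ _ hp hq => rw [map_add, map_add, hp, hq, mul_add]
  | monomial m r hm =>
    simp only [aeval_monomial, ← hm, Finsupp.weight_apply, Finsupp.sum, map_sum, map_nsmul,
      smul_eq_mul, Finsupp.prod, mul_pow, Finset.prod_mul_distrib, ← pow_mul,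
      Finset.prod_pow_eq_pow_sum, mul_comm (m _)]
    ring

variable [PartialOrder M] [CanonicallyOrderedAdd M]

theorem weightedHomogeneousComponent_mul_of_not_le {P : MvPolynomial σ R} {d e : M}
    (hP : IsWeightedHomogeneous w P d) (hde : ¬d ≤ e) (g : MvPolynomial σ R) :
    weightedHomogeneousComponent w e (P * g) = 0 := by
  rw [← weightedDecomposition.decompose'_apply]
  exact DirectSum.coe_decompose_mul_of_left_mem_of_not_le _ hP hde

theorem IsWeightedHomogeneous.le_of_dvd {P g : MvPolynomial σ R} {d e : M}
    (hP : IsWeightedHomogeneous w P d) (hg : IsWeightedHomogeneous w g e) (hg0 : g ≠ 0)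
    (hPg : P ∣ g) : d ≤ e := by
  obtain ⟨h, rfl⟩ := hPg
  by_contra hde
  rw [← hg.weightedHomogeneousComponent_same, weightedHomogeneousComponent_mul_of_not_le hP hde]
    at hg0
  exact hg0 rfl

theorem IsWeightedHomogeneous.eq_C_coeff_zero [IsAddTorsionFree M] (hw : ∀ i, w i ≠ 0)
    {f : MvPolynomial σ R} (hf : IsWeightedHomogeneous w f 0) : f = C (coeff 0 f) := by
  conv_lhs => rw [← hf.weightedHomogeneousComponent_same]
  exact weightedHomogeneousComponent_zero f hw

variable [Sub M] [OrderedSub M] [AddLeftReflectLE M]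

theorem weightedHomogeneousComponent_mul_of_le {P : MvPolynomial σ R} {d e : M}
    (hP : IsWeightedHomogeneous w P d) (hde : d ≤ e) (g : MvPolynomial σ R) :
    weightedHomogeneousComponent w e (P * g) = P * weightedHomogeneousComponent w (e - d) g := by
  simp only [← weightedDecomposition.decompose'_apply]
  exact DirectSum.coe_decompose_mul_of_left_mem_of_le _ hP hde

theorem IsWeightedHomogeneous.exists_eq_mul_of_dvd {P g : MvPolynomial σ R} {d e : M}
    (hP : IsWeightedHomogeneous w P d) (hg : IsWeightedHomogeneous w g e) (hPg : P ∣ g) :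
    ∃ h, IsWeightedHomogeneous w h (e - d) ∧ g = P * h := by
  obtain ⟨h, rfl⟩ := hPg
  by_cases hde : d ≤ e
  · refine ⟨weightedHomogeneousComponent w (e - d) h,
      weightedHomogeneousComponent_isWeightedHomogeneous _ _, ?_⟩
    rw [← weightedHomogeneousComponent_mul_of_le hP hde, hg.weightedHomogeneousComponent_same]
  · refine ⟨0, isWeightedHomogeneous_zero _ _ _, ?_⟩
    rw [mul_zero, ← hg.weightedHomogeneousComponent_same,
      weightedHomogeneousComponent_mul_of_not_le hP hde]

end MvPolynomial

variable {k : Type} [Field k]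

theorem bw_ne_zero (n : BiVar) : bw n ≠ 0 := by
  rcases n with n | n <;> simp [bw]

noncomputable section Forms

def rowForm (x : P1 k) : S2 k := C (x.rep 1) * X (Sum.inl 0) - C (x.rep 0) * X (Sum.inl 1)

def colForm (y : P1 k) : S2 k := C (y.rep 1) * X (Sum.inr 0) - C (y.rep 0) * X (Sum.inr 1)

def rowUnitForm (x : P1 k) : S2 k := C (x.rep (pivot x.rep))⁻¹ * X (Sum.inl (pivot x.rep))

def swapFactors : S2 k →ₐ[k] S2 k := rename Sum.swap

@[simp] theorem evalPt_C (z : PtQ k) (a : k) : evalPt z (C a) = a := eval_C a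

@[simp] theorem evalPt_X_inl (z : PtQ k) (i : Fin 2) : evalPt z (X (Sum.inl i)) = z.1.rep i :=
  eval_X ..

@[simp] theorem evalPt_X_inr (z : PtQ k) (j : Fin 2) : evalPt z (X (Sum.inr j)) = z.2.rep j :=
  eval_X ..

theorem evalPt_swapFactors (z : PtQ k) (f : S2 k) :
    evalPt z (swapFactors f) = evalPt z.swap f := by
  simp [evalPt, swapFactors, eval_rename, Sum.elim_swap]

theorem swapFactors_swapFactors (f : S2 k) : swapFactors (swapFactors f) = f := by
  simp [swapFactors, rename_rename]

theorem swapFactors_rowForm (x : P1 k) : swapFactors (rowForm x) = colForm x := by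
  simp [swapFactors, rowForm, colForm]

theorem isWeightedHomogeneous_swapFactors {f : S2 k} {d : ℕ × ℕ}
    (hf : IsWeightedHomogeneous bw f d) : IsWeightedHomogeneous bw (swapFactors f) d.swap := by
  rw [swapFactors, rename_eq_aeval]
  exact hf.aeval (AddEquiv.prodComm : ℕ × ℕ ≃+ ℕ × ℕ).toAddMonoidHom
    fun n => by rcases n with i | j <;> exact isWeightedHomogeneous_X k bw _

theorem isWeightedHomogeneous_rowForm (x : P1 k) :
    IsWeightedHomogeneous bw (rowForm x) (1, 0) :=
  ((isWeightedHomogeneous_X k bw _).C_mul _).sub ((isWeightedHomogeneous_X k bw _).C_mul _)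

theorem isWeightedHomogeneous_colForm (y : P1 k) :
    IsWeightedHomogeneous bw (colForm y) (0, 1) := by
  simpa [swapFactors_rowForm] using
    isWeightedHomogeneous_swapFactors (isWeightedHomogeneous_rowForm y)

theorem isWeightedHomogeneous_rowUnitForm (x : P1 k) :
    IsWeightedHomogeneous bw (rowUnitForm x) (1, 0) :=
  (isWeightedHomogeneous_X k bw _).C_mul _

theorem rep_pivot_ne_zero (x : P1 k) : x.rep (pivot x.rep) ≠ 0 := by
  unfold pivot
  split_ifs with h
  · exact h
  · exact fun h1 => x.rep_nonzero (funext fun i => by fin_cases i <;> simp_all)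

theorem evalPt_rowUnitForm (z : PtQ k) : evalPt z (rowUnitForm z.1) = 1 := by
  simp [rowUnitForm, rep_pivot_ne_zero]

theorem rep_cross_eq_zero_iff {x x' : P1 k} :
    x.rep 1 * x'.rep 0 - x.rep 0 * x'.rep 1 = 0 ↔ x' = x := by
  have hdet : (Matrix.of ![x'.rep, x.rep]).det = x.rep 1 * x'.rep 0 - x.rep 0 * x'.rep 1 := by
    rw [Matrix.det_fin_two]
    simp only [Matrix.of_apply, Matrix.cons_val_zero, Matrix.cons_val_one]
    ring
  rw [← not_iff_not]
  change _ ≠ 0 ↔ x' ≠ x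
  rw [← Projectivization.linearIndependent_pair_iff_ne, ← hdet, ← isUnit_iff_ne_zero,
    ← Matrix.isUnit_iff_isUnit_det, ← Matrix.linearIndependent_rows_iff_isUnit]
  rfl

theorem evalPt_rowForm_eq_zero_iff {z : PtQ k} {x : P1 k} :
    evalPt z (rowForm x) = 0 ↔ z.1 = x := by
  simpa [rowForm, mul_comm] using rep_cross_eq_zero_iff (x := x) (x' := z.1)

theorem evalPt_colForm_eq_zero_iff {z : PtQ k} {y : P1 k} :
    evalPt z (colForm y) = 0 ↔ z.2 = y := by
  rw [← swapFactors_rowForm, evalPt_swapFactors, evalPt_rowForm_eq_zero_iff, Prod.fst_swap]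

end Forms

noncomputable section Restriction

def restrictRow (x : P1 k) : S2 k →ₐ[k] S2 k :=
  aeval (Sum.elim (fun i => C (x.rep i)) (fun j => X (Sum.inr j)))

theorem evalPt_restrictRow (x : P1 k) (z : PtQ k) (f : S2 k) :
    evalPt z (restrictRow x f) = evalPt (x, z.2) f := by
  induction f using MvPolynomial.induction_on with
  | C a => simp [restrictRow]
  | add p q hp hq => simp [hp, hq]
  | mul_X p n hp =>
    simp only [map_mul, hp]
    rcases n with i | j <;> simp [restrictRow]

theorem isWeightedHomogeneous_restrictRow (x : P1 k) {f : S2 k} {u v : ℕ}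
    (hf : IsWeightedHomogeneous bw f (u, v)) :
    IsWeightedHomogeneous bw (restrictRow x f) (0, v) :=
  hf.aeval ((AddMonoidHom.inr ℕ ℕ).comp (AddMonoidHom.snd ℕ ℕ)) fun n => by
    rcases n with i | j
    · exact isWeightedHomogeneous_C bw (x.rep i)
    · simpa [bw] using isWeightedHomogeneous_X k bw (Sum.inr j)

theorem rowUnitForm_mul_C_sub_X_mem_span (x : P1 k) (i : Fin 2) :
    rowUnitForm x * C (x.rep i) - X (Sum.inl i) ∈ Ideal.span {rowForm x} := by
  have key : ∀ i j : Fin 2,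
      rowForm x ∣ C (x.rep i) * X (Sum.inl j) - C (x.rep j) * X (Sum.inl i) := by
    intro i j
    fin_cases i <;> fin_cases j
    · simp
    · exact ⟨-1, by simp [rowForm]⟩
    · exact ⟨1, by simp [rowForm]⟩
    · simp
  have hx := rep_pivot_ne_zero x
  have h : rowUnitForm x * C (x.rep i) - X (Sum.inl i) = C (x.rep (pivot x.rep))⁻¹ *
      (C (x.rep i) * X (Sum.inl (pivot x.rep)) - C (x.rep (pivot x.rep)) * X (Sum.inl i)) := by
    have hC : (C (x.rep (pivot x.rep))⁻¹ * C (x.rep (pivot x.rep)) : S2 k) = 1 := by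
      rw [← C_mul, inv_mul_cancel₀ hx, C_1]
    rw [rowUnitForm]
    linear_combination X (Sum.inl i) * hC
  rw [h, Ideal.mem_span_singleton]
  exact dvd_mul_of_dvd_right (key _ _) _

theorem sub_rowUnitForm_pow_mul_restrictRow_mem_span (x : P1 k) {f : S2 k} {u v : ℕ}
    (hf : IsWeightedHomogeneous bw f (u, v)) :
    f - rowUnitForm x ^ u * restrictRow x f ∈ Ideal.span {rowForm x} := by
  -- With `ℓ = rowUnitForm x`, substituting `ℓ * x.rep i` for `xᵢ` is the identity modulo
  -- `rowForm x`, and on a form of `x`-degree `u` it gives `ℓ ^ u * restrictRow x f`.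
  let s : BiVar → S2 k := fun n =>
    rowUnitForm x ^ (bw n).1 * Sum.elim (fun i => C (x.rep i)) (fun j => X (Sum.inr j)) n
  have hs : aeval s f = rowUnitForm x ^ u * restrictRow x f :=
    aeval_pow_mul_of_isWeightedHomogeneous (AddMonoidHom.fst ℕ ℕ) hf _ _
  have hmk : (Ideal.Quotient.mkₐ k (Ideal.span {rowForm x})).comp (aeval s) =
      Ideal.Quotient.mkₐ k _ := by
    ext (i | j)
    · simp only [AlgHom.comp_apply, aeval_X, Ideal.Quotient.mkₐ_eq_mk]
      exact Ideal.Quotient.eq.mpr (by simpa [s, bw] using rowUnitForm_mul_C_sub_X_mem_span x i)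
    · simp [s, bw]
  rw [← hs, ← Ideal.Quotient.eq]
  simpa using (DFunLike.congr_fun hmk f).symm

theorem exists_eq_restrictRow_add_rowForm_mul (x : P1 k) {f : S2 k} {u v : ℕ}
    (hf : IsWeightedHomogeneous bw f (u, v)) :
    ∃ h, IsWeightedHomogeneous bw h (u - 1, v) ∧
      f = rowUnitForm x ^ u * restrictRow x f + rowForm x * h := by
  have hr : IsWeightedHomogeneous bw (rowUnitForm x ^ u * restrictRow x f) (u, v) := by
    simpa using ((isWeightedHomogeneous_rowUnitForm x).pow u).mul
      (isWeightedHomogeneous_restrictRow x hf)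
  obtain ⟨h, hh, he⟩ := (isWeightedHomogeneous_rowForm x).exists_eq_mul_of_dvd (hf.sub hr)
    (Ideal.mem_span_singleton.mp (sub_rowUnitForm_pow_mul_restrictRow_mem_span x hf))
  exact ⟨h, by simpa using hh, by rw [← he]; ring⟩

end Restriction

theorem eq_zero_of_evalPt_eq_zero {f : S2 k} (hf : IsWeightedHomogeneous bw f 0) {z : PtQ k}
    (hz : evalPt z f = 0) : f = 0 := by
  rw [hf.eq_C_coeff_zero bw_ne_zero] at hz ⊢
  simpa using hz

theorem exists_eq_colForm_mul {g : S2 k} {v : ℕ} (hg : IsWeightedHomogeneous bw g (0, v))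
    {z : PtQ k} (hz : evalPt z g = 0) :
    ∃ h, IsWeightedHomogeneous bw h (0, v - 1) ∧ g = colForm z.2 * h := by
  have hg' := isWeightedHomogeneous_swapFactors hg
  obtain ⟨h, hh, he⟩ := exists_eq_restrictRow_add_rowForm_mul z.2 hg'
  have h0 : restrictRow z.2 (swapFactors g) = 0 :=
    eq_zero_of_evalPt_eq_zero (isWeightedHomogeneous_restrictRow z.2 hg') (z := z.swap)
      (by simpa [evalPt_restrictRow, evalPt_swapFactors] using hz)
  rw [h0, mul_zero, zero_add] at he
  refine ⟨swapFactors h, by simpa using isWeightedHomogeneous_swapFactors hh, ?_⟩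
  rw [← swapFactors_swapFactors g, he, map_mul, swapFactors_rowForm]

theorem isWeightedHomogeneous_prod_rowForm {ι : Type*} (s : Finset ι) (x : ι → P1 k) :
    IsWeightedHomogeneous bw (∏ i ∈ s, rowForm (x i)) (#s, 0) := by
  simpa using IsWeightedHomogeneous.prod s _ _ fun i _ => isWeightedHomogeneous_rowForm (x i)

theorem isWeightedHomogeneous_prod_colForm {ι : Type*} (s : Finset ι) (y : ι → P1 k) :
    IsWeightedHomogeneous bw (∏ i ∈ s, colForm (y i)) (0, #s) := by
  simpa using IsWeightedHomogeneous.prod s _ _ fun i _ => isWeightedHomogeneous_colForm (y i)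

theorem prod_colForm_dvd {ι : Type*} {s : Finset ι} {y : ι → P1 k} (hy : Set.InjOn y s)
    {x : P1 k} {g : S2 k} {v : ℕ} (hg : IsWeightedHomogeneous bw g (0, v))
    (hvan : ∀ i ∈ s, evalPt (x, y i) g = 0) : ∏ i ∈ s, colForm (y i) ∣ g := by
  classical
  induction s using Finset.induction_on generalizing g v with
  | empty => simp
  | insert i s hi ih =>
    obtain ⟨h, hh, rfl⟩ := exists_eq_colForm_mul hg (hvan i (mem_insert_self i s))
    rw [prod_insert hi]
    refine mul_dvd_mul_left _ (ih (hy.mono (by simp)) hh fun i' hi' => ?_)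
    have hi'i : y i' ≠ y i := fun heq =>
      hi (hy (mem_insert_of_mem hi') (mem_insert_self i s) heq ▸ hi')
    simpa [evalPt_colForm_eq_zero_iff, hi'i] using hvan i' (mem_insert_of_mem hi')

theorem card_le_of_vanishing_on_row {ι : Type*} {f : S2 k} {u v : ℕ}
    (hf : IsWeightedHomogeneous bw f (u, v)) {s : Finset ι} {x : P1 k} {y : ι → P1 k}
    (hy : Set.InjOn y s) (hvan : ∀ i ∈ s, evalPt (x, y i) f = 0) {y₀ : P1 k}
    (hy₀ : evalPt (x, y₀) f ≠ 0) : #s ≤ v := by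
  have hg := isWeightedHomogeneous_restrictRow x hf
  have hdvd : ∏ i ∈ s, colForm (y i) ∣ restrictRow x f :=
    prod_colForm_dvd hy hg (x := x) fun i hi => by rw [evalPt_restrictRow]; exact hvan i hi
  have hne : restrictRow x f ≠ 0 := fun h =>
    hy₀ (by rw [← evalPt_restrictRow x (x, y₀), h, map_zero])
  exact (Prod.mk_le_mk.mp ((isWeightedHomogeneous_prod_colForm s y).le_of_dvd hg hne hdvd)).2

theorem card_le_of_vanishing_on_col {ι : Type*} {f : S2 k} {u v : ℕ}
    (hf : IsWeightedHomogeneous bw f (u, v)) {s : Finset ι} {x : ι → P1 k} {y : P1 k}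
    (hx : Set.InjOn x s) (hvan : ∀ i ∈ s, evalPt (x i, y) f = 0) {x₀ : P1 k}
    (hx₀ : evalPt (x₀, y) f ≠ 0) : #s ≤ u :=
  card_le_of_vanishing_on_row (isWeightedHomogeneous_swapFactors hf) hx
    (by simpa [evalPt_swapFactors] using hvan) (by simpa [evalPt_swapFactors] using hx₀)

theorem exists_isWeightedHomogeneous_evalPt_eq_one (z : PtQ k) (d : ℕ × ℕ) :
    ∃ m, IsWeightedHomogeneous bw m d ∧ evalPt z m = 1 := by
  refine ⟨rowUnitForm z.1 ^ d.1 * swapFactors (rowUnitForm z.2) ^ d.2, ?_, ?_⟩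
  · simpa using ((isWeightedHomogeneous_rowUnitForm z.1).pow d.1).mul
      ((isWeightedHomogeneous_swapFactors (isWeightedHomogeneous_rowUnitForm z.2)).pow d.2)
  · rw [map_mul, map_pow, map_pow, evalPt_swapFactors, evalPt_rowUnitForm,
      show z.2 = z.swap.1 from rfl, evalPt_rowUnitForm, one_pow, one_pow, one_mul]

theorem exists_isWeightedHomogeneous_sub_mul_evalPt_eq_zero {F f : S2 k} {d e : ℕ × ℕ}
    (hF : IsWeightedHomogeneous bw F d) (hf : IsWeightedHomogeneous bw f e) (hde : d ≤ e)
    {z : PtQ k} (hFz : evalPt z F ≠ 0) :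
    ∃ c, IsWeightedHomogeneous bw (f - c * F) e ∧ evalPt z (f - c * F) = 0 := by
  obtain ⟨m, hm, hmz⟩ := exists_isWeightedHomogeneous_evalPt_eq_one z (e - d)
  refine ⟨C (evalPt z f / evalPt z F) * m, hf.sub ?_, ?_⟩
  · simpa [tsub_add_cancel_of_le hde] using (hm.C_mul _).mul hF
  · simp [hmz, hFz]

theorem evalPt_eq_zero_of_mem_pointIdeal {z : PtQ k} {f : S2 k} (hf : f ∈ pointIdeal z) :
    evalPt z f = 0 :=
  (Ideal.span_le (I := RingHom.ker (evalPt z))).mpr (fun _ hg => hg.2) hf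

theorem pointIdeal_isHomogeneous (z : PtQ k) :
    (pointIdeal z).IsHomogeneous (weightedHomogeneousSubmodule k bw) :=
  Ideal.homogeneous_span _ _ fun _ hg => hg.1

theorem mem_idealOfFinset_of_isWeightedHomogeneous {Z : Finset (PtQ k)} {f : S2 k} {d : ℕ × ℕ}
    (hf : IsWeightedHomogeneous bw f d) (hZ : ∀ z ∈ Z, evalPt z f = 0) :
    f ∈ idealOfFinset Z := by
  simp only [idealOfFinset, Submodule.mem_iInf]
  exact fun z hz => Ideal.subset_span ⟨⟨d, hf⟩, hZ z hz⟩

theorem idealOfFinset_le {Z : Finset (PtQ k)} {I : Ideal (S2 k)}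
    (hI : ∀ f d, IsWeightedHomogeneous bw f d → (∀ z ∈ Z, evalPt z f = 0) → f ∈ I) :
    idealOfFinset Z ≤ I := by
  intro f hf
  rw [← sum_weightedHomogeneousComponent bw f,
    finsum_eq_sum _ (weightedHomogeneousComponent_finsupp f)]
  refine Ideal.sum_mem _ fun d _ => hI _ d (weightedHomogeneousComponent_isWeightedHomogeneous d f)
    fun z hz => evalPt_eq_zero_of_mem_pointIdeal ?_
  simp only [idealOfFinset, Submodule.mem_iInf] at hf
  exact weightedHomogeneousComponent_mem_of_mem k bw (pointIdeal_isHomogeneous z) (hf z hz) d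

theorem Ideal.exists_irredundant_subset_span_eq {R : Type*} [CommSemiring R] [DecidableEq R]
    (G : Finset R) : ∃ G' ⊆ G, Ideal.span (G' : Set R) = Ideal.span G ∧
      ∀ g ∈ G', g ∉ Ideal.span ((G'.erase g : Finset R) : Set R) := by
  obtain ⟨G', hG', hmin⟩ := (G.powerset.filter fun G' : Finset R =>
    Ideal.span (G' : Set R) = Ideal.span G).exists_min_image card ⟨G, by simp⟩
  rw [mem_filter, mem_powerset] at hG'
  refine ⟨G', hG'.1, hG'.2, fun g hg hspan => ?_⟩
  have hspan' : Ideal.span ((G'.erase g : Finset R) : Set R) = Ideal.span G := by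
    rw [← hG'.2, ← insert_erase hg, coe_insert, erase_insert (notMem_erase g G'),
      Ideal.span, Ideal.span, Submodule.span_insert_eq_span hspan]
  have := hmin _ (mem_filter.mpr ⟨mem_powerset.mpr ((erase_subset g G').trans hG'.1), hspan'⟩)
  rw [card_erase_of_mem hg] at this
  have := card_pos.mpr ⟨g, hg⟩
  omega

theorem splitsIntoLines_prod_rowForm_mul_prod_colForm {ι κ : Type*} (s : Finset ι)
    (t : Finset κ) (x : ι → P1 k) (y : κ → P1 k) :
    SplitsIntoLines ((∏ i ∈ s, rowForm (x i)) * ∏ j ∈ t, colForm (y j)) := by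
  refine ⟨s.val.map (fun i => rowForm (x i)) + t.val.map (fun j => colForm (y j)), ?_, ?_⟩
  · simp only [Multiset.mem_add, Multiset.mem_map]
    rintro l (⟨i, -, rfl⟩ | ⟨j, -, rfl⟩)
    exacts [Or.inl (isWeightedHomogeneous_rowForm _), Or.inr (isWeightedHomogeneous_colForm _)]
  · rw [Multiset.prod_add]
    rfl

theorem evalPt_prod_rowForm_eq_zero {ι : Type*} {s : Finset ι} {x : ι → P1 k} {z : PtQ k}
    {i : ι} (hi : i ∈ s) (hxi : x i = z.1) : evalPt z (∏ i ∈ s, rowForm (x i)) = 0 := by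
  rw [map_prod]
  exact prod_eq_zero hi (evalPt_rowForm_eq_zero_iff.mpr hxi.symm)

theorem evalPt_prod_colForm_eq_zero {ι : Type*} {s : Finset ι} {y : ι → P1 k} {z : PtQ k}
    {j : ι} (hj : j ∈ s) (hyj : y j = z.2) : evalPt z (∏ j ∈ s, colForm (y j)) = 0 := by
  rw [map_prod]
  exact prod_eq_zero hj (evalPt_colForm_eq_zero_iff.mpr hyj.symm)

theorem evalPt_prod_rowForm_ne_zero {ι : Type*} {s : Finset ι} {x : ι → P1 k} {z : PtQ k}
    (hx : ∀ i ∈ s, x i ≠ z.1) : evalPt z (∏ i ∈ s, rowForm (x i)) ≠ 0 := by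
  rw [map_prod, prod_ne_zero_iff]
  exact fun i hi h => hx i hi (evalPt_rowForm_eq_zero_iff.mp h).symm

theorem evalPt_prod_colForm_ne_zero {ι : Type*} {s : Finset ι} {y : ι → P1 k} {z : PtQ k}
    (hy : ∀ j ∈ s, y j ≠ z.2) : evalPt z (∏ j ∈ s, colForm (y j)) ≠ 0 := by
  rw [map_prod, prod_ne_zero_iff]
  exact fun j hj h => hy j hj (evalPt_colForm_eq_zero_iff.mp h).symm

theorem Finset.mem_iff_lt_card_of_isLowerSet {s : Finset ℕ} (hs : IsLowerSet (s : Set ℕ))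
    {j : ℕ} : j ∈ s ↔ j < #s := by
  obtain ⟨n, hn⟩ := hs.eq_univ_or_Iio.resolve_left fun h => Set.infinite_univ (h ▸ s.finite_toSet)
  rw [← coe_range, coe_inj] at hn
  simp [hn]

namespace Staircase

variable (T : Staircase k)

theorem injOn_R : Set.InjOn T.R (Set.Iic T.a) := fun i hi i' hi' h => T.hR i hi i' hi' h

theorem injOn_C : Set.InjOn T.C (Set.Iic T.b) := fun j hj j' hj' h => T.hC j hj j' hj' h

theorem mem_D_iff_lt_rowCount {i j : ℕ} : (i, j) ∈ T.D ↔ j < T.rowCount i := by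
  have hmem : ∀ j, j ∈ (T.D.filter (·.1 = i)).image Prod.snd ↔ (i, j) ∈ T.D := by simp
  have hcard : #((T.D.filter (·.1 = i)).image Prod.snd) = T.rowCount i :=
    card_image_of_injOn fun p hp q hq h => Prod.ext ((mem_filter.mp hp).2.trans
      (mem_filter.mp hq).2.symm) h
  rw [← hcard, ← hmem, mem_iff_lt_card_of_isLowerSet]
  intro j' j hj hj'
  rw [mem_coe, hmem] at hj' ⊢
  exact T.lower _ hj' (i, j) le_rfl hj

theorem mem_D_iff_lt_colCount {i j : ℕ} : (i, j) ∈ T.D ↔ i < T.colCount j := by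
  have hmem : ∀ i, i ∈ (T.D.filter (·.2 = j)).image Prod.fst ↔ (i, j) ∈ T.D := by simp
  have hcard : #((T.D.filter (·.2 = j)).image Prod.fst) = T.colCount j :=
    card_image_of_injOn fun p hp q hq h => Prod.ext h ((mem_filter.mp hp).2.trans
      (mem_filter.mp hq).2.symm)
  rw [← hcard, ← hmem, mem_iff_lt_card_of_isLowerSet]
  intro i' i hi hi'
  rw [mem_coe, hmem] at hi' ⊢
  exact T.lower _ hi' (i, j) hi le_rfl

theorem rowCount_antitone : Antitone T.rowCount := fun i i' hii' => by
  by_contra! h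
  exact (lt_irrefl _) ((T.mem_D_iff_lt_rowCount.mp (T.lower _
    (T.mem_D_iff_lt_rowCount.mpr h) (i, T.rowCount i) hii' le_rfl)))

theorem rowCount_eq_zero {i : ℕ} (hi : T.a < i) : T.rowCount i = 0 := by
  by_contra! h
  exact absurd (T.bound _ (T.mem_D_iff_lt_rowCount.mpr (Nat.pos_of_ne_zero h))).1 (by omega)

noncomputable def stairGen (t : ℕ) : S2 k :=
  (∏ i ∈ range t, rowForm (T.R i)) * ∏ j ∈ range (T.rowCount t), colForm (T.C j)

noncomputable def stairGens : Finset (S2 k) := (range (T.a + 2)).image T.stairGen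

noncomputable def separator (e : ℕ × ℕ) : S2 k :=
  (∏ i ∈ (range (T.colCount e.2)).erase e.1, rowForm (T.R i)) *
    ∏ j ∈ (range (T.rowCount e.1)).erase e.2, colForm (T.C j)

theorem isWeightedHomogeneous_stairGen (t : ℕ) :
    IsWeightedHomogeneous bw (T.stairGen t) (t, T.rowCount t) := by
  simpa [stairGen] using (isWeightedHomogeneous_prod_rowForm (range t) T.R).mul
    (isWeightedHomogeneous_prod_colForm (range (T.rowCount t)) T.C)

theorem evalPt_stairGen {z : ℕ × ℕ} (hz : z ∈ T.D) (t : ℕ) :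
    evalPt (T.R z.1, T.C z.2) (T.stairGen t) = 0 := by
  rw [stairGen, map_mul]
  rcases lt_or_ge z.1 t with hzt | hzt
  · rw [evalPt_prod_rowForm_eq_zero (mem_range.mpr hzt) rfl, zero_mul]
  · refine mul_eq_zero_of_right _ (evalPt_prod_colForm_eq_zero (mem_range.mpr ?_) rfl)
    exact (T.mem_D_iff_lt_rowCount.mp hz).trans_le (T.rowCount_antitone hzt)

theorem isWeightedHomogeneous_separator {e : ℕ × ℕ} (he : e ∈ T.D) :
    IsWeightedHomogeneous bw (T.separator e) (T.colCount e.2 - 1, T.rowCount e.1 - 1) := by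
  have h1 : e.1 ∈ range (T.colCount e.2) := mem_range.mpr (T.mem_D_iff_lt_colCount.mp he)
  have h2 : e.2 ∈ range (T.rowCount e.1) := mem_range.mpr (T.mem_D_iff_lt_rowCount.mp he)
  simpa [separator, card_erase_of_mem h1, card_erase_of_mem h2] using
    (isWeightedHomogeneous_prod_rowForm ((range (T.colCount e.2)).erase e.1) T.R).mul
      (isWeightedHomogeneous_prod_colForm ((range (T.rowCount e.1)).erase e.2) T.C)

theorem evalPt_separator_ne_zero {e : ℕ × ℕ} (he : e ∈ T.D) :
    evalPt (T.R e.1, T.C e.2) (T.separator e) ≠ 0 := by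
  rw [separator, map_mul]
  refine mul_ne_zero (evalPt_prod_rowForm_ne_zero fun i hi h => ?_)
    (evalPt_prod_colForm_ne_zero fun j hj h => ?_)
  · rw [mem_erase, mem_range, ← mem_D_iff_lt_colCount] at hi
    exact hi.1 (T.injOn_R (T.bound _ hi.2).1 (T.bound _ he).1 h)
  · rw [mem_erase, mem_range, ← mem_D_iff_lt_rowCount] at hj
    exact hj.1 (T.injOn_C (T.bound _ hj.2).2 (T.bound _ he).2 h)

theorem evalPt_separator_eq_zero {e z : ℕ × ℕ} (he : e ∈ T.D) (hz : z ∈ T.D) (hze : z ≠ e) :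
    evalPt (T.R z.1, T.C z.2) (T.separator e) = 0 := by
  rw [separator, map_mul]
  by_cases hcol : z.1 ≠ e.1 ∧ (z.1, e.2) ∈ T.D
  · refine mul_eq_zero_of_left (evalPt_prod_rowForm_eq_zero (i := z.1) ?_ rfl) _
    rw [mem_erase, mem_range, ← mem_D_iff_lt_colCount]
    exact hcol
  · refine mul_eq_zero_of_right _ (evalPt_prod_colForm_eq_zero (j := z.2) ?_ rfl)
    rw [mem_erase, mem_range, ← mem_D_iff_lt_rowCount]
    by_cases h1 : z.1 = e.1
    · exact ⟨fun h2 => hze (Prod.ext h1 h2), h1 ▸ hz⟩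
    · have h2 : z.2 < e.2 := by
        by_contra! h2
        exact hcol ⟨h1, T.lower z hz (z.1, e.2) le_rfl h2⟩
      exact ⟨h2.ne, T.lower e he (e.1, z.2) le_rfl h2.le⟩

theorem prod_rowForm_mul_mem_span_stairGens {s : ℕ} (hs : s ≤ T.a + 1) {f : S2 k} {u v : ℕ}
    (hf : IsWeightedHomogeneous bw f (u, v))
    (hvan : ∀ z ∈ T.D, s ≤ z.1 → evalPt (T.R z.1, T.C z.2) f = 0) :
    (∏ i ∈ range s, rowForm (T.R i)) * f ∈ Ideal.span (T.stairGens : Set (S2 k)) := by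
  have hgen : ∀ t ≤ T.a + 1, T.stairGen t ∈ Ideal.span (T.stairGens : Set (S2 k)) :=
    fun t ht => Ideal.subset_span (mem_image_of_mem _ (mem_range.mpr (by omega)))
  induction hs using Nat.decreasingInduction generalizing f u v with
  | self =>
    have h : T.stairGen (T.a + 1) = ∏ i ∈ range (T.a + 1), rowForm (T.R i) := by
      simp [stairGen, T.rowCount_eq_zero (lt_add_one T.a)]
    exact h ▸ Ideal.mul_mem_right _ _ (hgen _ le_rfl)
  | of_succ s hs ih =>
    obtain ⟨h, hh, hfh⟩ := exists_eq_restrictRow_add_rowForm_mul (T.R s) hf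
    obtain ⟨c, hc⟩ := prod_colForm_dvd (s := range (T.rowCount s)) (y := T.C) (x := T.R s)
      (T.injOn_C.mono fun j hj => (T.bound _ (T.mem_D_iff_lt_rowCount.mpr (mem_range.mp hj))).2)
      (isWeightedHomogeneous_restrictRow (T.R s) hf) fun j hj => by
        rw [evalPt_restrictRow]
        exact hvan (s, j) (T.mem_D_iff_lt_rowCount.mpr (mem_range.mp hj)) le_rfl
    have hvan' : ∀ z ∈ T.D, s + 1 ≤ z.1 → evalPt (T.R z.1, T.C z.2) h = 0 := by
      intro z hz hsz
      have hrow : evalPt (T.R z.1, T.C z.2) (rowForm (T.R s)) ≠ 0 := fun h0 => by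
        have := T.injOn_R (T.bound _ hz).1 (show s ≤ T.a by omega)
          (evalPt_rowForm_eq_zero_iff.mp h0)
        omega
      have hres : evalPt (T.R z.1, T.C z.2) (restrictRow (T.R s) f) = 0 := by
        rw [evalPt_restrictRow]
        exact hvan (s, z.2) (T.lower z hz _ (by simp; omega) le_rfl) le_rfl
      have := hvan z hz (by omega)
      rw [hfh, map_add, map_mul, map_mul, hres, mul_zero, zero_add] at this
      exact (mul_eq_zero.mp this).resolve_left hrow
    rw [hfh, mul_add, hc]
    refine Ideal.add_mem _ ?_ ?_
    · have : (∏ i ∈ range s, rowForm (T.R i)) * (rowUnitForm (T.R s) ^ u *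
          ((∏ j ∈ range (T.rowCount s), colForm (T.C j)) * c)) =
          T.stairGen s * (rowUnitForm (T.R s) ^ u * c) := by
        rw [stairGen]
        ring
      exact this ▸ Ideal.mul_mem_right _ _ (hgen s (by omega))
    · rw [← mul_assoc, ← prod_range_succ]
      exact ih hh hvan'

theorem mem_span_stairGens {f : S2 k} {u v : ℕ} (hf : IsWeightedHomogeneous bw f (u, v))
    (hvan : ∀ z ∈ T.D, evalPt (T.R z.1, T.C z.2) f = 0) :
    f ∈ Ideal.span (T.stairGens : Set (S2 k)) := by
  simpa using T.prod_rowForm_mul_mem_span_stairGens (Nat.zero_le _) hf fun z hz _ => hvan z hz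

theorem separator_degree_le {e : ℕ × ℕ} (he : e ∈ T.D) {f : S2 k} {u v : ℕ}
    (hf : IsWeightedHomogeneous bw f (u, v)) (hfe : evalPt (T.R e.1, T.C e.2) f ≠ 0)
    (hvan : ∀ z ∈ T.D, z ≠ e → (z.1 = e.1 ∨ z.2 = e.2) → evalPt (T.R z.1, T.C z.2) f = 0) :
    (T.colCount e.2 - 1, T.rowCount e.1 - 1) ≤ (u, v) := by
  have h1 : e.1 ∈ range (T.colCount e.2) := mem_range.mpr (T.mem_D_iff_lt_colCount.mp he)
  have h2 : e.2 ∈ range (T.rowCount e.1) := mem_range.mpr (T.mem_D_iff_lt_rowCount.mp he)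
  have hu : #((range (T.colCount e.2)).erase e.1) ≤ u := by
    refine card_le_of_vanishing_on_col hf (T.injOn_R.mono fun i hi => ?_) (fun i hi => ?_) hfe
    · rw [mem_coe, mem_erase, mem_range, ← mem_D_iff_lt_colCount] at hi
      exact (T.bound _ hi.2).1
    · rw [mem_erase, mem_range, ← mem_D_iff_lt_colCount] at hi
      exact hvan (i, e.2) hi.2 (fun h => hi.1 (congrArg Prod.fst h)) (Or.inr rfl)
  have hv : #((range (T.rowCount e.1)).erase e.2) ≤ v := by
    refine card_le_of_vanishing_on_row hf (T.injOn_C.mono fun j hj => ?_) (fun j hj => ?_) hfe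
    · rw [mem_coe, mem_erase, mem_range, ← mem_D_iff_lt_rowCount] at hj
      exact (T.bound _ hj.2).2
    · rw [mem_erase, mem_range, ← mem_D_iff_lt_rowCount] at hj
      exact hvan (e.1, j) hj.2 (fun h => hj.1 (congrArg Prod.snd h)) (Or.inl rfl)
  rw [card_erase_of_mem h1, card_range] at hu
  rw [card_erase_of_mem h2, card_range] at hv
  exact Prod.mk_le_mk.mpr ⟨hu, hv⟩

theorem mem_span_stairGens_union_separators {E : Finset (ℕ × ℕ)} (hED : E ⊆ T.D)
    (hrow : Set.InjOn Prod.fst (E : Set (ℕ × ℕ))) (hcol : Set.InjOn Prod.snd (E : Set (ℕ × ℕ)))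
    {f : S2 k} {u v : ℕ} (hf : IsWeightedHomogeneous bw f (u, v))
    (hvan : ∀ z ∈ T.D \ E, evalPt (T.R z.1, T.C z.2) f = 0) :
    f ∈ Ideal.span ((T.stairGens ∪ E.image T.separator : Finset (S2 k)) : Set (S2 k)) := by
  induction E using Finset.induction_on generalizing f u v with
  | empty => exact Ideal.span_mono (by simp) (T.mem_span_stairGens hf (by simpa using hvan))
  | insert e E heE ih =>
    have hspan : Ideal.span ((T.stairGens ∪ E.image T.separator : Finset (S2 k)) : Set (S2 k)) ≤
        Ideal.span ((T.stairGens ∪ (insert e E).image T.separator : Finset (S2 k)) : Set (S2 k)) :=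
      Ideal.span_mono (coe_subset.mpr (union_subset_union subset_rfl
        (image_subset_image (subset_insert e E))))
    have he : e ∈ T.D := hED (mem_insert_self e E)
    have hED' := (subset_insert e E).trans hED
    have hrow' := hrow.mono (coe_subset.mpr (subset_insert e E))
    have hcol' := hcol.mono (coe_subset.mpr (subset_insert e E))
    by_cases hfe : evalPt (T.R e.1, T.C e.2) f = 0
    · refine hspan (ih hED' hrow' hcol' hf fun z hz => ?_)
      by_cases hze : z = e
      · exact hze ▸ hfe
      · exact hvan z (by simp_all)
    have hdeg := T.separator_degree_le he hf hfe fun z hz hze hcross => hvan z <| by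
      refine mem_sdiff.mpr ⟨hz, fun hzE => hze ?_⟩
      rcases hcross with h | h
      exacts [hrow hzE (mem_insert_self e E) h, hcol hzE (mem_insert_self e E) h]
    obtain ⟨c, hc, hce⟩ := exists_isWeightedHomogeneous_sub_mul_evalPt_eq_zero
      (T.isWeightedHomogeneous_separator he) hf hdeg (T.evalPt_separator_ne_zero he)
    have hrest := ih hED' hrow' hcol' hc fun z hz => by
      by_cases hze : z = e
      · exact hze ▸ hce
      · rw [mem_sdiff] at hz
        rw [map_sub, map_mul, T.evalPt_separator_eq_zero he hz.1 hze, mul_zero, sub_zero]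
        exact hvan z (by simp_all)
    rw [← sub_add_cancel f (c * T.separator e)]
    exact add_mem (hspan hrest) (Ideal.mul_mem_left _ _ (Ideal.subset_span
      (mem_union_right _ (mem_image_of_mem _ (mem_insert_self e E)))))

theorem residual_eq_span {E : Finset (ℕ × ℕ)} (hED : E ⊆ T.D)
    (hrow : Set.InjOn Prod.fst (E : Set (ℕ × ℕ))) (hcol : Set.InjOn Prod.snd (E : Set (ℕ × ℕ))) :
    T.residual E =
      Ideal.span ((T.stairGens ∪ E.image T.separator : Finset (S2 k)) : Set (S2 k)) := by
  refine le_antisymm (idealOfFinset_le fun f d hf hvan => ?_) (Ideal.span_le.mpr fun g hg => ?_)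
  · exact T.mem_span_stairGens_union_separators hED hrow hcol (u := d.1) (v := d.2) hf
      fun z hz => hvan _ (mem_image_of_mem _ hz)
  · simp only [stairGens, coe_union, coe_image, Set.mem_union, Set.mem_image, mem_coe] at hg
    rcases hg with ⟨t, -, rfl⟩ | ⟨e, he, rfl⟩
    · exact mem_idealOfFinset_of_isWeightedHomogeneous (T.isWeightedHomogeneous_stairGen t)
        fun _ hz => by
          obtain ⟨z, hzZ, rfl⟩ := mem_image.mp hz
          exact T.evalPt_stairGen (mem_sdiff.mp hzZ).1 t
    · exact mem_idealOfFinset_of_isWeightedHomogeneous (T.isWeightedHomogeneous_separator (hED he))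
        fun _ hz => by
          obtain ⟨z, hzZ, rfl⟩ := mem_image.mp hz
          rw [mem_sdiff] at hzZ
          exact T.evalPt_separator_eq_zero (hED he) hzZ.1 fun h => hzZ.2 (h ▸ he)

theorem splitsIntoLines_of_mem {E : Finset (ℕ × ℕ)} {g : S2 k}
    (hg : g ∈ T.stairGens ∪ E.image T.separator) : SplitsIntoLines g := by
  simp only [stairGens, mem_union, mem_image] at hg
  rcases hg with ⟨t, -, rfl⟩ | ⟨e, -, rfl⟩
  all_goals exact splitsIntoLines_prod_rowForm_mul_prod_colForm _ _ _ _

end Staircase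

theorem stmt16_general (k : Type) [Field k] (T : Staircase k)
    (h : ℕ) (pt : Fin h → ℕ × ℕ)
    (hmem : ∀ l, T.Interior (pt l).1 (pt l).2)
    (hrow : ∀ l l', (pt l).1 = (pt l').1 → l = l')
    (hcol : ∀ l l', (pt l).2 = (pt l').2 → l = l') :
    ∃ G : Finset (S2 k),
      Ideal.span (G : Set (S2 k)) = T.residual (Finset.univ.image pt) ∧
      (∀ g ∈ G, g ∉ Ideal.span ((G.erase g : Finset (S2 k)) : Set (S2 k))) ∧
      (∀ g ∈ G, SplitsIntoLines g) := by
  have hED : Finset.univ.image pt ⊆ T.D := by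
    simpa [subset_iff] using fun l => (hmem l).1
  have hinj : ∀ π : ℕ × ℕ → ℕ, (∀ l l', π (pt l) = π (pt l') → l = l') →
      Set.InjOn π (Finset.univ.image pt : Set (ℕ × ℕ)) := by
    simp only [coe_image, coe_univ, Set.image_univ]
    rintro π hπ _ ⟨l, rfl⟩ _ ⟨l', rfl⟩ hll'
    rw [hπ l l' hll']
  obtain ⟨G, hGsub, hGspan, hGirr⟩ :=
    Ideal.exists_irredundant_subset_span_eq (T.stairGens ∪ (Finset.univ.image pt).image T.separator)
  refine ⟨G, ?_, hGirr, fun g hg => T.splitsIntoLines_of_mem (hGsub hg)⟩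
  rw [hGspan, T.residual_eq_span hED (hinj _ hrow) (hinj _ hcol)]

/-- I_Z admits a minimal generating set consisting of products of forms of
degree (1,0) and (0,1), i.e. curves which are unions of (1,0)- and (0,1)-lines. -/
theorem stmt16 (k : Type) [Field k] [IsAlgClosed k] (T : Staircase k)
    (h : ℕ) (pt : Fin h → ℕ × ℕ)
    (hmem : ∀ l, T.Interior (pt l).1 (pt l).2)
    (hrow : ∀ l l', (pt l).1 = (pt l').1 → l = l')
    (hcol : ∀ l l', (pt l).2 = (pt l').2 → l = l') :
    ∃ G : Finset (S2 k),
      Ideal.span (G : Set (S2 k)) = T.residual (Finset.univ.image pt) ∧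
      (∀ g ∈ G, g ∉ Ideal.span ((G.erase g : Finset (S2 k)) : Set (S2 k))) ∧
      (∀ g ∈ G, SplitsIntoLines g) :=
  stmt16_general k T h pt hmem hrow hcol
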